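/- arXiv:2207.04192 — 11 statements merged into one kernel-verified Lean document; each statement's English description precedes it below -/
import Mathlib

section
/- Let n, m ≥ 1 and let M₁, M₂ : Fin n → Fin m → ℝ be the leader's and follower's payoff matrices of a finite two-player game. Then there exist a probability vector x* on Fin n and a column index j* : Fin m such that j* is a best response to x* (i.e., for all j : Fin m, ∑ i, x* i * M₂ i j* ≥ ∑ i, x* i * M₂ i j), and for every probability vector x on Fin n and every j : Fin m that is a best response to x (i.e., for all j', ∑ i, x i * M₂ i j ≥ ∑ i, x i * M₂ i j'), one has ∑ i, x i * M₁ i j ≤ ∑ i, x* i * M₁ i j*. In other words, a (strong) Stackelberg equilibrium of the single-shot game exists. -/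
/-!
Since the follower has finitely many columns and their payoffs are continuous in the leader's
strategy, the graph of the follower's best-response correspondence is a closed subset of the
compact set `stdSimplex × columns`. The leader's payoff is continuous on it, so it attains its
maximum there; a maximizing pair is a strong Stackelberg equilibrium.
-/

open Set

section BestResponse

variable {X κ : Type*}

def bestResponseGraph (S : Set X) (u : κ → X → ℝ) : Set (X × κ) :=
  {p | p.1 ∈ S ∧ ∀ j, u j p.1 ≤ u p.2 p.1}

theorem bestResponseGraph_nonempty [Finite κ] [Nonempty κ] {S : Set X} (hS : S.Nonempty)
    (u : κ → X → ℝ) : (bestResponseGraph S u).Nonempty := by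
  obtain ⟨x, hx⟩ := hS
  obtain ⟨j, hj⟩ := Finite.exists_max fun j => u j x
  exact ⟨(x, j), hx, hj⟩

variable [TopologicalSpace X] [TopologicalSpace κ] [DiscreteTopology κ]

theorem isClosed_setOf_isBestResponse {u : κ → X → ℝ} (hu : ∀ j, Continuous (u j)) :
    IsClosed {p : X × κ | ∀ j, u j p.1 ≤ u p.2 p.1} := by
  have hchosen : Continuous fun p : X × κ => u p.2 p.1 :=
    continuous_prod_of_discrete_right.2 hu
  simp only [ofPred_forall]
  exact isClosed_iInter fun j => isClosed_le ((hu j).comp continuous_fst) hchosen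

theorem isCompact_bestResponseGraph [Finite κ] {S : Set X} (hS : IsCompact S)
    {u : κ → X → ℝ} (hu : ∀ j, Continuous (u j)) :
    IsCompact (bestResponseGraph S u) := by
  have hgraph : bestResponseGraph S u = S ×ˢ univ ∩ {p | ∀ j, u j p.1 ≤ u p.2 p.1} := by
    ext p
    simp [bestResponseGraph]
  rw [hgraph]
  exact (hS.prod isCompact_univ).inter_right (isClosed_setOf_isBestResponse hu)

theorem exists_isMaxOn_bestResponseGraph [Finite κ] [Nonempty κ] {S : Set X} (hS : IsCompact S)
    (hSne : S.Nonempty) {u v : κ → X → ℝ} (hu : ∀ j, Continuous (u j))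
    (hv : ∀ j, Continuous (v j)) :
    ∃ p ∈ bestResponseGraph S u, IsMaxOn (fun q : X × κ => v q.2 q.1) (bestResponseGraph S u) p :=
  (isCompact_bestResponseGraph hS hu).exists_isMaxOn (bestResponseGraph_nonempty hSne u)
    (continuous_prod_of_discrete_right.2 hv).continuousOn

end BestResponse

/-- Existence of a (strong) Stackelberg equilibrium in a single-shot
two-player game: there is a leader mixed strategy `x*` and a follower
best-response column `j*` such that no leader strategy together with a
best-responding column can give the leader a larger payoff. -/
theorem stackelberg_equilibrium_exists (n m : ℕ) (hn : 1 ≤ n) (hm : 1 ≤ m)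
    (M₁ M₂ : Fin n → Fin m → ℝ) :
    ∃ (xs : Fin n → ℝ) (js : Fin m),
      (∀ i, 0 ≤ xs i) ∧ (∑ i, xs i = 1) ∧
      (∀ j, ∑ i, xs i * M₂ i js ≥ ∑ i, xs i * M₂ i j) ∧
      (∀ x : Fin n → ℝ, (∀ i, 0 ≤ x i) → (∑ i, x i = 1) →
        ∀ j : Fin m, (∀ j', ∑ i, x i * M₂ i j ≥ ∑ i, x i * M₂ i j') →
          ∑ i, x i * M₁ i j ≤ ∑ i, xs i * M₁ i js) := by
  have : Nonempty (Fin n) := ⟨⟨0, hn⟩⟩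
  have : Nonempty (Fin m) := ⟨⟨0, hm⟩⟩
  obtain ⟨⟨xs, js⟩, ⟨hxs, hbest⟩, hmax⟩ :=
    exists_isMaxOn_bestResponseGraph (isCompact_stdSimplex ℝ (Fin n))
      ⟨_, single_mem_stdSimplex ℝ (Classical.arbitrary _)⟩
      (u := fun j x => ∑ i, x i * M₂ i j) (v := fun j x => ∑ i, x i * M₁ i j)
      (fun _ => by fun_prop) (fun _ => by fun_prop)
  exact ⟨xs, js, hxs.1, hxs.2, hbest,
    fun x hx₀ hx₁ j hj => isMaxOn_iff.1 hmax (x, j) ⟨⟨hx₀, hx₁⟩, hj⟩⟩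
end

section
/- Let n, T ≥ 1 and let w : (Fin T → Fin n × Fin n) → ℝ be a probability mass function on the finite set of length-T transcripts of action pairs (w s ≥ 0 for all s and ∑ s, w s = 1). Then there exists a probability vector β on Fin n × Fin n such that for every function M : Fin n × Fin n → ℝ, ∑ s, w s * (∑ t, M (s t)) = T * ∑ k, β k * M k. Consequently, for payoff functions M₁, M₂ : Fin n × Fin n → ℝ and any V : ℝ, if ∑ s, w s * (∑ t, M₂ (s t)) ≥ V * T, then ∑ s, w s * (∑ t, M₁ (s t)) ≤ T * sSup { r : ℝ | ∃ α a probability vector on Fin n × Fin n, ∑ k, α k * M₂ k ≥ V ∧ r = ∑ k, α k * M₁ k }. -/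
/-!
Averaging the empirical distribution of action pairs of a transcript against the transcript
distribution gives a probability vector `β` on action pairs whose pairing with any payoff `M` is
the expected average payoff. If the follower's expected average payoff is at least `V`, then `β`
is feasible for the LP, so the leader's expected average payoff `β ⬝ᵥ M₁` is at most the LP
optimum; the supremum exists because the simplex is compact.
-/

open Finset

section EmpiricalDist

variable {τ ι : Type*} [Fintype τ] [DecidableEq ι]

noncomputable def empiricalDist (s : τ → ι) : ι → ℝ :=
  (Fintype.card τ : ℝ)⁻¹ • ∑ t, Pi.single (s t) 1

variable [Fintype ι]

lemma empiricalDist_mem_stdSimplex [Nonempty τ] (s : τ → ι) :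
    empiricalDist s ∈ stdSimplex ℝ ι := by
  have := (convex_stdSimplex ℝ ι).sum_mem (t := univ) (w := fun _ => (Fintype.card τ : ℝ)⁻¹)
    (z := fun t => Pi.single (s t) 1) (fun _ _ => by positivity) (by simp [card_univ])
    (fun t _ => single_mem_stdSimplex ℝ (s t))
  simpa [empiricalDist, ← smul_sum] using this

lemma empiricalDist_dotProduct (s : τ → ι) (M : ι → ℝ) :
    empiricalDist s ⬝ᵥ M = (Fintype.card τ : ℝ)⁻¹ * ∑ t, M (s t) := by
  simp [empiricalDist, smul_dotProduct, sum_dotProduct, single_dotProduct]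

variable [DecidableEq τ]

noncomputable def expectedEmpiricalDist (w : (τ → ι) → ℝ) : ι → ℝ :=
  ∑ s, w s • empiricalDist s

lemma expectedEmpiricalDist_mem_stdSimplex [Nonempty τ] {w : (τ → ι) → ℝ}
    (hw : ∀ s, 0 ≤ w s) (hw1 : ∑ s, w s = 1) :
    expectedEmpiricalDist w ∈ stdSimplex ℝ ι :=
  (convex_stdSimplex ℝ ι).sum_mem (fun s _ => hw s) hw1
    (fun s _ => empiricalDist_mem_stdSimplex s)

lemma sum_mul_sum_comp_eq_card_mul_expectedEmpiricalDist_dotProduct [Nonempty τ]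
    (w : (τ → ι) → ℝ) (M : ι → ℝ) :
    ∑ s, w s * ∑ t, M (s t) = Fintype.card τ * (expectedEmpiricalDist w ⬝ᵥ M) := by
  rw [expectedEmpiricalDist, sum_dotProduct, mul_sum]
  refine sum_congr rfl fun s _ => ?_
  rw [smul_dotProduct, empiricalDist_dotProduct, smul_eq_mul]
  field_simp

end EmpiricalDist

lemma bddAbove_setOf_dotProduct_stdSimplex {ι : Type*} [Fintype ι]
    (P : (ι → ℝ) → Prop) (f : ι → ℝ) :
    BddAbove {r : ℝ | ∃ α : ι → ℝ, (∀ k, 0 ≤ α k) ∧ (∑ k, α k = 1) ∧ P α ∧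
      r = ∑ k, α k * f k} := by
  refine ((isCompact_stdSimplex ℝ ι).bddAbove_image
    (f := (· ⬝ᵥ f)) (by fun_prop)).mono ?_
  rintro r ⟨α, hα0, hα1, -, rfl⟩
  exact ⟨α, ⟨hα0, hα1⟩, rfl⟩

theorem lp_upper_bound_transcripts_general (n T : ℕ) (hT : 1 ≤ T)
    (w : (Fin T → Fin n × Fin n) → ℝ)
    (hw : ∀ s, 0 ≤ w s) (hw1 : ∑ s, w s = 1) :
    (∃ β : Fin n × Fin n → ℝ, (∀ k, 0 ≤ β k) ∧ (∑ k, β k = 1) ∧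
      ∀ M : Fin n × Fin n → ℝ,
        ∑ s, w s * (∑ t, M (s t)) = T * ∑ k, β k * M k) ∧
    ∀ (M₁ M₂ : Fin n × Fin n → ℝ) (V : ℝ),
      (∑ s, w s * (∑ t, M₂ (s t)) ≥ V * T) →
      ∑ s, w s * (∑ t, M₁ (s t)) ≤
        T * sSup { r : ℝ | ∃ α : Fin n × Fin n → ℝ,
          (∀ k, 0 ≤ α k) ∧ (∑ k, α k = 1) ∧
          (∑ k, α k * M₂ k ≥ V) ∧ r = ∑ k, α k * M₁ k } := by
  have : Nonempty (Fin T) := ⟨⟨0, hT⟩⟩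
  have hT0 : (0 : ℝ) < T := by exact_mod_cast hT
  set β := expectedEmpiricalDist w
  have hβ : β ∈ stdSimplex ℝ _ := expectedEmpiricalDist_mem_stdSimplex hw hw1
  have hexp : ∀ M : Fin n × Fin n → ℝ, ∑ s, w s * ∑ t, M (s t) = T * ∑ k, β k * M k := by
    intro M
    rw [sum_mul_sum_comp_eq_card_mul_expectedEmpiricalDist_dotProduct, Fintype.card_fin]
    rfl
  refine ⟨⟨β, hβ.1, hβ.2, hexp⟩, fun M₁ M₂ V hV => ?_⟩
  have hfeas : V ≤ ∑ k, β k * M₂ k :=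
    le_of_mul_le_mul_left (by rw [hexp] at hV; linarith) hT0
  rw [hexp]
  exact mul_le_mul_of_nonneg_left
    (le_csSup (bddAbove_setOf_dotProduct_stdSimplex _ M₁) ⟨β, hβ.1, hβ.2, hfeas, rfl⟩) hT0.le

/-- Distribution-over-transcripts core of the LP upper bound: any
probability mass function on length-`T` transcripts has a time-averaged
marginal `β` over action pairs, and if the follower's expected total payoff
is at least `V * T` then the leader's expected total payoff is at most `T`
times the LP optimum. -/
theorem lp_upper_bound_transcripts (n T : ℕ) (hn : 1 ≤ n) (hT : 1 ≤ T)
    (w : (Fin T → Fin n × Fin n) → ℝ)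
    (hw : ∀ s, 0 ≤ w s) (hw1 : ∑ s, w s = 1) :
    (∃ β : Fin n × Fin n → ℝ, (∀ k, 0 ≤ β k) ∧ (∑ k, β k = 1) ∧
      ∀ M : Fin n × Fin n → ℝ,
        ∑ s, w s * (∑ t, M (s t)) = T * ∑ k, β k * M k) ∧
    ∀ (M₁ M₂ : Fin n × Fin n → ℝ) (V : ℝ),
      (∑ s, w s * (∑ t, M₂ (s t)) ≥ V * T) →
      ∑ s, w s * (∑ t, M₁ (s t)) ≤
        T * sSup { r : ℝ | ∃ α : Fin n × Fin n → ℝ,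
          (∀ k, 0 ≤ α k) ∧ (∑ k, α k = 1) ∧
          (∑ k, α k * M₂ k ≥ V) ∧ r = ∑ k, α k * M₁ k } :=
  lp_upper_bound_transcripts_general n T hT w hw hw1
end

section
/- Let n ≥ 1 and M₁ : Fin n × Fin n → ℝ with |M₁ k| ≤ 1 for all k. Let α be a probability vector on Fin n × Fin n, let T, N, c, r : ℕ satisfy T = c*N + r, and let a : Fin T → Fin n × Fin n be a sequence of action pairs such that for every k : Fin n × Fin n, the number of indices t with (t : ℕ) < c*N and a t = k is equal (as a real number) to α k * (c*N). Then ∑ t, M₁ (a t) ≥ (∑ k, α k * M₁ k) * T − 2 * r. -/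
/-- Lemma 4.4 of the paper: if in the first `c*N` rounds the empirical
frequencies of action pairs realize the distribution `α` exactly, then the
leader's total payoff over `T = c*N + r` rounds falls short of `T` times
the LP objective by at most `2r`. -/
theorem prescribed_transcript_payoff (n : ℕ) (hn : 1 ≤ n)
    (M₁ : Fin n × Fin n → ℝ) (hM : ∀ k, |M₁ k| ≤ 1)
    (α : Fin n × Fin n → ℝ) (hα : ∀ k, 0 ≤ α k) (hα1 : ∑ k, α k = 1)
    (T N c r : ℕ) (hT : T = c * N + r)
    (a : Fin T → Fin n × Fin n)
    (hcount : ∀ k : Fin n × Fin n,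
      ((Finset.univ.filter fun t : Fin T => (t : ℕ) < c * N ∧ a t = k).card : ℝ)
        = α k * (c * N)) :
    ∑ t, M₁ (a t) ≥ (∑ k, α k * M₁ k) * T - 2 * r := by
  set S := ∑ k, α k * M₁ k with hS
  have hSle : |S| ≤ 1 := by
    calc |S| ≤ ∑ k, |α k * M₁ k| := Finset.abs_sum_le_sum_abs _ _
    _ ≤ ∑ k, α k := by
        refine Finset.sum_le_sum fun k _ => ?_
        rw [abs_mul, abs_of_nonneg (hα k)]
        calc α k * |M₁ k| ≤ α k * 1 := by
              exact mul_le_mul_of_nonneg_left (hM k) (hα k)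
        _ = α k := mul_one _
    _ = 1 := hα1
  set s := Finset.univ.filter fun t : Fin T => (t : ℕ) < c * N with hs
  have hsplit : ∑ t, M₁ (a t) = (∑ t ∈ s, M₁ (a t)) + ∑ t ∈ sᶜ, M₁ (a t) :=
    (Finset.sum_add_sum_compl s _).symm
  have hA : ∑ t ∈ s, M₁ (a t) = S * (c * N) := by
    
    rw [show (∑ t ∈ s, M₁ (a t)) = ∑ k, ∑ t ∈ s.filter fun t => a t = k, M₁ (a t) from
      (Finset.sum_fiberwise s a (fun t => M₁ (a t))).symm]
    rw [hS, Finset.sum_mul]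
    refine Finset.sum_congr rfl fun k _ => ?_
    have h1 : ∑ t ∈ s.filter fun t => a t = k, M₁ (a t)
        = ∑ t ∈ s.filter fun t => a t = k, M₁ k := by
      refine Finset.sum_congr rfl fun t ht => ?_
      rw [(Finset.mem_filter.mp ht).2]
    rw [h1, Finset.sum_const, nsmul_eq_mul]
    have h2 : (s.filter fun t => a t = k)
        = Finset.univ.filter fun t : Fin T => (t : ℕ) < c * N ∧ a t = k := by
      simp [hs, Finset.filter_filter]
    rw [h2, hcount k]
    ring
  have hscard : (s.card : ℝ) = c * N := by
    have hfib : s.card = ∑ k, (s.filter fun t => a t = k).card :=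
      Finset.card_eq_sum_card_fiberwise (fun t _ => Finset.mem_univ (a t))
    have : (s.card : ℝ) = ∑ k, ((s.filter fun t => a t = k).card : ℝ) := by
      rw [hfib]; push_cast; ring
    rw [this]
    have h2 : ∀ k : Fin n × Fin n, (s.filter fun t => a t = k)
        = Finset.univ.filter fun t : Fin T => (t : ℕ) < c * N ∧ a t = k := by
      intro k; simp [hs, Finset.filter_filter]
    calc (∑ k, ((s.filter fun t => a t = k).card : ℝ))
        = ∑ k, α k * (c * N) := by
          refine Finset.sum_congr rfl fun k _ => ?_
          rw [h2 k, hcount k]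
      _ = (c * N : ℝ) := by rw [← Finset.sum_mul, hα1, one_mul]
  have hcard : (sᶜ.card : ℝ) = r := by
    have h2 : s.card + sᶜ.card = T := by
      rw [Finset.card_add_card_compl, Fintype.card_fin]
    have h3 : (s.card : ℝ) + sᶜ.card = T := by exact_mod_cast congrArg (Nat.cast : ℕ → ℝ) h2
    have hTr : (T : ℝ) = c * N + r := by exact_mod_cast congrArg (Nat.cast : ℕ → ℝ) hT
    linarith [hscard]
  have hB : ∑ t ∈ sᶜ, M₁ (a t) ≥ -(r : ℝ) := by
    have : ∀ t ∈ sᶜ, -1 ≤ M₁ (a t) := fun t _ => neg_le_of_abs_le (hM (a t))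
    calc ∑ t ∈ sᶜ, M₁ (a t) ≥ ∑ _t ∈ sᶜ, (-1 : ℝ) := Finset.sum_le_sum this
      _ = -(r : ℝ) := by rw [Finset.sum_const, nsmul_eq_mul, hcard]; ring
  have hTr : (T : ℝ) = c * N + r := by exact_mod_cast congrArg (Nat.cast : ℕ → ℝ) hT
  have hr : (0 : ℝ) ≤ r := Nat.cast_nonneg r
  have hS1 : S ≤ 1 := le_of_abs_le hSle
  rw [hsplit, hA, hTr]
  nlinarith [hB, mul_le_mul_of_nonneg_right hS1 hr]
end

section
/- Let A, T' : ℝ with A ≥ 1 and T' ≥ 1, and let m, V : ℝ with c := m − V satisfying c ≥ √10 / (T'^(1/4) * √A). Set δ := 10/√T' and s := 10/(c*√T' + 10). Then 0 ≤ s ≤ √(10*A) / T'^(1/4), and s*m + (1 − s)*(V − δ) ≥ V. -/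
/-- First case of Claim 4.5 (few_enough_swaps): when the gap `c = m - V` is
at least `√10/(T'^(1/4)·√A)`, the swap fraction `s = 10/(c√T' + 10)` is at
most `√(10A)/T'^(1/4)` and swapping an `s` fraction of mass to value `m`
raises the follower's average value from `V - 10/√T'` back to at least `V`. -/
theorem swap_fraction_bound (A T' m V : ℝ) (hA : 1 ≤ A) (hT : 1 ≤ T')
    (hgap : Real.sqrt 10 / (T' ^ ((1 : ℝ) / 4) * Real.sqrt A) ≤ m - V) :
    let c := m - V
    let δ := 10 / Real.sqrt T'
    let s := 10 / (c * Real.sqrt T' + 10)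
    0 ≤ s ∧ s ≤ Real.sqrt (10 * A) / T' ^ ((1 : ℝ) / 4) ∧
      s * m + (1 - s) * (V - δ) ≥ V := by
  intro c δ s
  have hcdef : c = m - V := rfl
  have hδdef : δ = 10 / Real.sqrt T' := rfl
  have hsdef : s = 10 / (c * Real.sqrt T' + 10) := rfl
  have hT0 : (0:ℝ) < T' := by linarith
  have hsT : 0 < Real.sqrt T' := Real.sqrt_pos.2 hT0
  have ha : 0 < T' ^ ((1:ℝ)/4) := Real.rpow_pos_of_pos hT0 _
  have hsA : 0 < Real.sqrt A := Real.sqrt_pos.2 (by linarith)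
  have h10 : 0 < Real.sqrt 10 := Real.sqrt_pos.2 (by norm_num)
  have hcpos : 0 < c := lt_of_lt_of_le (by positivity) hgap
  have hden : 0 < c * Real.sqrt T' + 10 := by positivity
  have hs0 : 0 ≤ s := by rw [hsdef]; positivity
  have hsq : Real.sqrt T' = T' ^ ((1:ℝ)/4) * T' ^ ((1:ℝ)/4) := by
    rw [← Real.rpow_add hT0]
    norm_num
    exact Real.sqrt_eq_rpow T'
  refine ⟨hs0, ?_, ?_⟩
  · have h1 : Real.sqrt 10 * T' ^ ((1:ℝ)/4) / Real.sqrt A ≤ c * Real.sqrt T' := by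
      have := mul_le_mul_of_nonneg_right hgap (le_of_lt hsT)
      calc Real.sqrt 10 * T' ^ ((1:ℝ)/4) / Real.sqrt A
          = Real.sqrt 10 / (T' ^ ((1:ℝ)/4) * Real.sqrt A) * Real.sqrt T' := by
            rw [hsq]; field_simp
        _ ≤ c * Real.sqrt T' := this
    have hpos1 : 0 < Real.sqrt 10 * T' ^ ((1:ℝ)/4) / Real.sqrt A := by positivity
    have h2 : s ≤ 10 / (Real.sqrt 10 * T' ^ ((1:ℝ)/4) / Real.sqrt A) := by
      rw [hsdef]
      apply div_le_div_of_nonneg_left (by norm_num) hpos1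
      linarith
    have h3 : 10 / (Real.sqrt 10 * T' ^ ((1:ℝ)/4) / Real.sqrt A)
        = Real.sqrt (10 * A) / T' ^ ((1:ℝ)/4) := by
      rw [Real.sqrt_mul (by norm_num : (0:ℝ) ≤ 10)]
      have h10sq : Real.sqrt 10 * Real.sqrt 10 = 10 := Real.mul_self_sqrt (by norm_num)
      rw [div_div_eq_mul_div, div_eq_div_iff (by positivity) (by positivity)]
      linear_combination (-(Real.sqrt A * T' ^ ((1:ℝ)/4))) * h10sq
    linarith [h2, h3.le]
  · have key : s * (c + δ) = δ := by
      rw [hsdef, hδdef]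
      field_simp
      try ring
    nlinarith [key]
end

section
/- Let n ≥ 4 be an even natural number and let G be a simple graph on Fin n. Suppose C is a finite set of vertices with C.card = n/2 that is a vertex cover of G (for all u, w, if G.Adj u w then u ∈ C or w ∈ C). Then there exist probability vectors p₁, p₂ on Fin n such that: (i) for every vertex v, (n/(n−2)) * (1 − p₁ v) * (1 − p₂ v) = 1; and (ii) for all u, w with G.Adj u w, (n/(n−2)) * (1 − p₁ u − p₁ w) ≤ 1. -/
/-! Let Player 1 play uniformly on the cover `C` and Player 2 uniformly on its complement; both
sets have `n/2` elements, so each vertex gets probability `2/n` from exactly one of the two players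
and `(1 - p₁ v) * (1 - p₂ v) = 1 - 2/n` for every `v`. Every edge has an endpoint in `C`, so
`p₁ u + p₁ w ≥ 2/n`. Finally `n/(n-2) * (1 - 2/n) = 1`. -/

open Finset

noncomputable section

variable {ι : Type*} [DecidableEq ι]

def uniformOn (s : Finset ι) (i : ι) : ℝ := if i ∈ s then (#s : ℝ)⁻¹ else 0

lemma uniformOn_nonneg (s : Finset ι) (i : ι) : 0 ≤ uniformOn s i := by
  unfold uniformOn
  split_ifs <;> positivity

lemma sum_uniformOn [Fintype ι] {s : Finset ι} (hs : s.Nonempty) : ∑ i, uniformOn s i = 1 := by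
  simp only [uniformOn, sum_ite_mem, univ_inter, sum_const, nsmul_eq_mul]
  exact mul_inv_cancel₀ (by exact_mod_cast hs.card_pos.ne')

lemma one_sub_uniformOn_mul_one_sub_uniformOn_compl [Fintype ι] {s : Finset ι}
    (hs : #sᶜ = #s) (v : ι) :
    (1 - uniformOn s v) * (1 - uniformOn sᶜ v) = 1 - (#s : ℝ)⁻¹ := by
  by_cases hv : v ∈ s <;> simp [uniformOn, hv, hs]

lemma inv_card_le_uniformOn_add {s : Finset ι} {u w : ι} (h : u ∈ s ∨ w ∈ s) :
    (#s : ℝ)⁻¹ ≤ uniformOn s u + uniformOn s w := by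
  have hu := uniformOn_nonneg s u
  have hw := uniformOn_nonneg s w
  rcases h with h | h <;> simp only [uniformOn, h, if_true] at hu hw ⊢ <;> linarith

end

lemma div_sub_two_mul_one_sub_inv {c : ℝ} (hc : c ≠ 0) (hc1 : c ≠ 1) :
    2 * c / (2 * c - 2) * (1 - c⁻¹) = 1 := by
  have : 2 * c - 2 ≠ 0 := fun h => hc1 (by linarith)
  field_simp

/-- Core of Lemma A.1 (first_half_hardness): given a balanced vertex cover
of size `n/2`, Players 1 and 2 have mixed strategies making every vertex move
worth exactly 1 and every edge move worth at most 1 to Player 3. -/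
theorem balanced_cover_gives_strategies (n : ℕ) (hn : 4 ≤ n) (heven : Even n)
    (G : SimpleGraph (Fin n)) (C : Finset (Fin n))
    (hCcard : C.card = n / 2)
    (hcover : ∀ u w, G.Adj u w → u ∈ C ∨ w ∈ C) :
    ∃ p₁ p₂ : Fin n → ℝ,
      (∀ i, 0 ≤ p₁ i) ∧ (∑ i, p₁ i = 1) ∧
      (∀ i, 0 ≤ p₂ i) ∧ (∑ i, p₂ i = 1) ∧
      (∀ v, (n : ℝ) / ((n : ℝ) - 2) * (1 - p₁ v) * (1 - p₂ v) = 1) ∧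
      (∀ u w, G.Adj u w → (n : ℝ) / ((n : ℝ) - 2) * (1 - p₁ u - p₁ w) ≤ 1) := by
  have hn_nat : n = 2 * #C := by
    obtain ⟨m, rfl⟩ := heven
    omega
  have hn_eq : (n : ℝ) = 2 * #C := by exact_mod_cast hn_nat
  have hcompl : #Cᶜ = #C := by rw [card_compl, Fintype.card_fin]; omega
  have hC : (#C : ℝ) ≠ 0 := by norm_cast; omega
  have hC1 : (#C : ℝ) ≠ 1 := by norm_cast; omega
  have hCne : C.Nonempty := card_pos.mp (by omega)
  have hCcne : Cᶜ.Nonempty := card_pos.mp (by omega)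
  have hscale : (0 : ℝ) ≤ n / (n - 2) := by
    have : (4 : ℝ) ≤ n := by exact_mod_cast hn
    exact div_nonneg (by linarith) (by linarith)
  refine ⟨uniformOn C, uniformOn Cᶜ, uniformOn_nonneg C, sum_uniformOn hCne,
    uniformOn_nonneg Cᶜ, sum_uniformOn hCcne, fun v => ?_, fun u w huw => ?_⟩
  · rw [mul_assoc, one_sub_uniformOn_mul_one_sub_uniformOn_compl hcompl, hn_eq,
      div_sub_two_mul_one_sub_inv hC hC1]
  · calc (n : ℝ) / (n - 2) * (1 - uniformOn C u - uniformOn C w)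
        ≤ n / (n - 2) * (1 - (#C : ℝ)⁻¹) := by
          have := inv_card_le_uniformOn_add (hcover u w huw)
          exact mul_le_mul_of_nonneg_left (by linarith) hscale
      _ = 1 := by rw [hn_eq, div_sub_two_mul_one_sub_inv hC hC1]
end

section
/- Let n ≥ 4 be an even natural number, let c ≥ 4 be a natural number, and let G be a simple graph on Fin n that has no vertex cover of size at most n/2 (there is no finite vertex set C with C.card ≤ n/2 such that every edge of G has an endpoint in C). Then for all probability vectors p₁, p₂ on Fin n, either there exists a vertex v with (n/(n−2)) * (1 − p₁ v) * (1 − p₂ v) > 1 + 1/((n−2) * n^(c−1)), or there exist u, w with G.Adj u w and (n/(n−2)) * (1 − p₁ u − p₁ w) > 1 + 1/((n−2) * n^(c−1)). -/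
set_option maxHeartbeats 1600000 in
/-- Lemma 5.2 (player3_min): if `G` has no vertex cover of size at most
`n/2`, then against any mixed strategies of Players 1 and 2, Player 3 has a
vertex or edge move with expected payoff strictly greater than
`1 + 1/((n-2)·n^(c-1))`. -/
theorem player3_has_good_move (n c : ℕ) (hn : 4 ≤ n) (heven : Even n)
    (hc : 4 ≤ c) (G : SimpleGraph (Fin n))
    (hnocover : ¬ ∃ C : Finset (Fin n), C.card ≤ n / 2 ∧
      ∀ u w, G.Adj u w → u ∈ C ∨ w ∈ C)
    (p₁ p₂ : Fin n → ℝ)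
    (hp₁ : ∀ i, 0 ≤ p₁ i) (hp₁s : ∑ i, p₁ i = 1)
    (hp₂ : ∀ i, 0 ≤ p₂ i) (hp₂s : ∑ i, p₂ i = 1) :
    (∃ v, (n : ℝ) / ((n : ℝ) - 2) * (1 - p₁ v) * (1 - p₂ v)
        > 1 + 1 / (((n : ℝ) - 2) * (n : ℝ) ^ (c - 1))) ∨
    (∃ u w, G.Adj u w ∧ (n : ℝ) / ((n : ℝ) - 2) * (1 - p₁ u - p₁ w)
        > 1 + 1 / (((n : ℝ) - 2) * (n : ℝ) ^ (c - 1))) := by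
  by_contra hcon
  push_neg at hcon
  obtain ⟨h1, h2⟩ := hcon
  push_neg at hnocover
  set N : ℝ := (n : ℝ) with hN
  have hN4 : (4:ℝ) ≤ N := by rw [hN]; exact_mod_cast hn
  have hN0 : (0:ℝ) < N := by linarith
  have hN2 : (0:ℝ) < N - 2 := by linarith
  set δ : ℝ := 1 / N ^ (c - 1) with hδdef
  have hpow : (0:ℝ) < N ^ (c-1) := by positivity
  have hδ0 : 0 < δ := by positivity
  have he : 1 / ((N - 2) * N ^ (c - 1)) * (N - 2) = δ := by
    rw [hδdef]; field_simp
  have hδ3 : δ * N ^ 3 ≤ 1 := by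
    rw [hδdef, div_mul_eq_mul_div, one_mul, div_le_one hpow]
    exact pow_le_pow_right₀ (by linarith) (by omega)
  have h16 : (16:ℝ) ≤ N^2 := by nlinarith [hN4]
  have h64 : (64:ℝ) ≤ N^3 := by nlinarith [mul_le_mul hN4 h16 (by norm_num) (by linarith : (0:ℝ) ≤ N)]
  have hδ1 : δ ≤ 1/64 := by
    nlinarith [hδ3, mul_le_mul_of_nonneg_left h64 hδ0.le]
  -- vertex condition, scaled
  have hA : ∀ v, N * ((1 - p₁ v) * (1 - p₂ v)) ≤ N - 2 + δ := by
    intro v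
    have h := h1 v
    rw [show N / (N-2) * (1 - p₁ v) * (1 - p₂ v)
        = N * ((1 - p₁ v) * (1 - p₂ v)) / (N-2) by ring,
       div_le_iff₀ hN2] at h
    nlinarith [he, h]
  have hA' : ∀ v, 2 - δ + N * (p₁ v * p₂ v) ≤ N * (p₁ v + p₂ v) := by
    intro v; nlinarith [hA v]
  -- sum: ∑ p₁ p₂ ≤ δ
  have hB : ∑ v, p₁ v * p₂ v ≤ δ := by
    have hBsum := Finset.sum_le_sum (fun v (_ : v ∈ Finset.univ) => hA' v)
    have hL : ∑ v : Fin n, (2 - δ + N * (p₁ v * p₂ v))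
        = N * (2 - δ) + N * ∑ v, p₁ v * p₂ v := by
      rw [Finset.sum_add_distrib, Finset.sum_const, Finset.card_univ,
          Fintype.card_fin, nsmul_eq_mul, ← Finset.mul_sum, hN]
    have hR : ∑ v : Fin n, N * (p₁ v + p₂ v) = N * 2 := by
      rw [← Finset.mul_sum, Finset.sum_add_distrib, hp₁s, hp₂s]; norm_num
    rw [hL, hR] at hBsum
    have : N * (∑ v, p₁ v * p₂ v) ≤ N * δ := by linarith
    exact le_of_mul_le_mul_left this hN0
  set C : Finset (Fin n) := Finset.univ.filter (fun v => 1 - δ ≤ N * p₁ v) with hC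
  clear_value C
  set m : ℝ := (C.card : ℝ) with hmdef
  set S2 : ℝ := ∑ v ∈ C, p₂ v with hS2def
  clear_value m S2
  have hS2nn : 0 ≤ S2 := hS2def ▸ Finset.sum_nonneg fun v _ => hp₂ v
  have hCprod : (1 - δ) * S2 ≤ N * δ := by
    rw [hS2def]
    have h1' : ∀ v ∈ C, (1 - δ) * p₂ v ≤ N * (p₁ v * p₂ v) := by
      intro v hv
      rw [hC, Finset.mem_filter] at hv
      have hvC : 1 - δ ≤ N * p₁ v := hv.2
      nlinarith [hp₂ v, hvC]
    have hsub : ∑ v ∈ C, p₁ v * p₂ v ≤ ∑ v, p₁ v * p₂ v :=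
      Finset.sum_le_sum_of_subset_of_nonneg (Finset.subset_univ C)
        (fun i _ _ => mul_nonneg (hp₁ i) (hp₂ i))
    calc (1-δ) * ∑ v ∈ C, p₂ v = ∑ v ∈ C, (1-δ) * p₂ v := by rw [Finset.mul_sum]
    _ ≤ ∑ v ∈ C, N * (p₁ v * p₂ v) := Finset.sum_le_sum h1'
    _ = N * ∑ v ∈ C, p₁ v * p₂ v := by rw [Finset.mul_sum]
    _ ≤ N * δ := mul_le_mul_of_nonneg_left (hsub.trans hB) hN0.le
  have hS2b : S2 ≤ 2 * N * δ := by
    nlinarith [hCprod, hS2nn, hδ1]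
  have hCmain : m * (2 - δ) - N * S2 ≤ N := by
    have h3 : ∀ v ∈ C, 2 - δ - N * p₂ v ≤ N * p₁ v := by
      intro v _
      nlinarith [hA' v, mul_nonneg (hp₁ v) (hp₂ v), hN0]
    have h4 := Finset.sum_le_sum h3
    have h5 : ∑ v ∈ C, (2 - δ - N * p₂ v)
        = m*(2-δ) - N * S2 := by
      rw [hmdef, hS2def,
        Finset.sum_sub_distrib, Finset.sum_const, nsmul_eq_mul, ← Finset.mul_sum]
    have h6 : ∑ v ∈ C, N * p₁ v ≤ N := by
      rw [← Finset.mul_sum]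
      have h7 : ∑ v ∈ C, p₁ v ≤ 1 := by
        rw [← hp₁s]
        exact Finset.sum_le_sum_of_subset_of_nonneg (Finset.subset_univ C)
          (fun i _ _ => hp₁ i)
      have h8 := mul_le_mul_of_nonneg_left h7 hN0.le
      linarith
    rw [h5] at h4
    linarith
  have hcard : m * (2 - δ) ≤ N + 2 * N^2 * δ := by
    have h9 : N * S2 ≤ N * (2 * N * δ) := mul_le_mul_of_nonneg_left hS2b hN0.le
    linarith [hCmain, h9]
  obtain ⟨k, hk⟩ := heven
  have hkcard : C.card ≤ n / 2 := by
    have hkc : C.card ≤ k := by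
      by_contra hcc
      push_neg at hcc
      have hm : (k:ℝ) + 1 ≤ m := by rw [hmdef]; exact_mod_cast hcc
      have hNk : N = 2*(k:ℝ) := by rw [hN, hk]; push_cast; ring
      have hδN2 : δ * N^2 ≤ 1/4 := by
        nlinarith [hδ3, mul_le_mul_of_nonneg_left
          (show 4*N^2 ≤ N^3 by nlinarith [hN4, sq_nonneg N]) hδ0.le]
      have hδN : δ * N ≤ 1/16 := by
        nlinarith [hδ3, mul_le_mul_of_nonneg_left
          (show 16*N ≤ N^3 by nlinarith [hN4, sq_nonneg N]) hδ0.le]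
      have hm' : N/2 + 1 ≤ m := by linarith [hm, hNk]
      have hmul := mul_le_mul_of_nonneg_right hm' (by linarith : (0:ℝ) ≤ 2 - δ)
      nlinarith [hcard, hmul, hδN2, hδN, hδ1, hN4]
    omega
  obtain ⟨u, w, hadj, huC, hwC⟩ := hnocover C hkcard
  have hu : N * p₁ u < 1 - δ := by
    by_contra hh; push_neg at hh
    exact huC (by rw [hC, Finset.mem_filter]; exact ⟨Finset.mem_univ u, hh⟩)
  have hw : N * p₁ w < 1 - δ := by
    by_contra hh; push_neg at hh
    exact hwC (by rw [hC, Finset.mem_filter]; exact ⟨Finset.mem_univ w, hh⟩)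
  have h2' := h2 u w hadj
  rw [div_mul_eq_mul_div, div_le_iff₀ hN2] at h2'
  nlinarith [he, hu, hw, hδ0, h2']
end

section
/- Let δ, a, b, ε : ℝ with δ ≤ 1, 0 < ε, ε ≤ b, b ≤ a, and a < 1/2. Then (δ − b + ε)/(1 − b + ε) + (δ − a − ε)/(1 − a − ε) ≤ (δ − b)/(1 − b) + (δ − a)/(1 − a). -/
/-- Key real inequality in the water-filling argument of Claim 5.3:
shifting `ε` mass from the lighter vertex `b` to the heavier vertex `a`
does not increase the Player-2 mass needed to restore coverage. -/
theorem waterfilling_inequality (δ a b ε : ℝ) (hδ : δ ≤ 1) (hε : 0 < ε)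
    (hεb : ε ≤ b) (hba : b ≤ a) (ha : a < 1 / 2) :
    (δ - b + ε) / (1 - b + ε) + (δ - a - ε) / (1 - a - ε)
      ≤ (δ - b) / (1 - b) + (δ - a) / (1 - a) := by
  have h1 : (0:ℝ) < 1 - a - ε := by linarith
  have h2 : (0:ℝ) < 1 - a := by linarith
  have h3 : (0:ℝ) < 1 - b := by linarith
  have h4 : (0:ℝ) < 1 - b + ε := by linarith
  have hδ' : (0:ℝ) ≤ 1 - δ := by linarith
  rw [div_add_div _ _ (ne_of_gt h4) (ne_of_gt h1), div_add_div _ _ (ne_of_gt h3) (ne_of_gt h2),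
    div_le_div_iff₀ (by positivity) (by positivity)]
  nlinarith [mul_nonneg (mul_nonneg hδ' hε.le) (sub_nonneg.2 hba), mul_pos h1 h2, mul_pos h3 h4,
    mul_nonneg (mul_nonneg hδ' hε.le) hε.le, sq_nonneg (a-b), sq_nonneg ε,
    mul_nonneg hδ' (mul_nonneg hε.le (mul_nonneg hε.le hε.le))]
end

section
/- Fix a natural number T ≥ 3. For a follower move sequence b : Fin T → Bool (true = defect, false = cooperate), define the grim-trigger leader moves ℓ : Fin T → Bool by ℓ t = true if and only if there exists s < t with b s = true, and define the follower's total payoff F(b) := ∑ t, pay₂ (ℓ t) (b t) and the leader's total payoff L(b) := ∑ t, pay₁ (ℓ t) (b t), where pay₁ false false = 3, pay₁ false true = 0, pay₁ true false = 5, pay₁ true true = 1, and pay₂ false false = 3, pay₂ false true = 5, pay₂ true false = 0, pay₂ true true = 1. Let b* be the sequence defecting only in the last round (b* t = true iff t = T−1). Then F(b*) = 3*(T−1) + 5; for every b ≠ b*, F(b) < F(b*); L(b*) = 3*(T−1); and the leader's average payoff L(b*)/T ≥ 2 > 1. -/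
/-- Lemma 3.8 (separation) for the repeated Prisoner's Dilemma: against the
grim-trigger leader, the unique payoff-maximizing follower response defects
only in the last round, giving the leader total `3(T-1)` and average at
least `2 > 1`. -/
theorem grim_trigger_prisoners_dilemma (T : ℕ) (hT : 3 ≤ T) :
    let pay₁ : Bool → Bool → ℝ := fun l f =>
      if l then (if f then 1 else 5) else (if f then 0 else 3)
    let pay₂ : Bool → Bool → ℝ := fun l f =>
      if l then (if f then 1 else 0) else (if f then 5 else 3)
    let lead : (Fin T → Bool) → Fin T → Bool := fun b t =>
      decide (∃ s : Fin T, s < t ∧ b s = true)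
    let F : (Fin T → Bool) → ℝ := fun b => ∑ t, pay₂ (lead b t) (b t)
    let L : (Fin T → Bool) → ℝ := fun b => ∑ t, pay₁ (lead b t) (b t)
    let bstar : Fin T → Bool := fun t => decide ((t : ℕ) = T - 1)
    F bstar = 3 * ((T : ℝ) - 1) + 5 ∧
    (∀ b : Fin T → Bool, b ≠ bstar → F b < F bstar) ∧
    L bstar = 3 * ((T : ℝ) - 1) ∧
    L bstar / (T : ℝ) ≥ 2 ∧ (2 : ℝ) > 1 := by
  intro pay₁ pay₂ lead F L bstar
  have hT1 : 1 ≤ T := by omega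
  have hlead_star : ∀ t : Fin T, lead bstar t = false := by
    intro t
    simp only [lead, bstar, decide_eq_false_iff_not]
    rintro ⟨s, hst, hs⟩
    have h1 : (s : ℕ) < (t : ℕ) := hst
    have h2 : (t : ℕ) < T := t.isLt
    simp only [decide_eq_true_eq] at hs
    omega
  have hlast : (⟨T - 1, by omega⟩ : Fin T) ∈ (Finset.univ : Finset (Fin T)) :=
    Finset.mem_univ _
  have hsum_ind : ∀ c : ℝ, ∑ t : Fin T, (if (t : ℕ) = T - 1 then c else 0) = c := by
    intro c
    rw [Finset.sum_eq_single (⟨T - 1, by omega⟩ : Fin T)]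
    · simp
    · intro t _ ht
      have : (t : ℕ) ≠ T - 1 := fun h => ht (Fin.ext h)
      simp [this]
    · simp at hlast ⊢
  -- compute F bstar
  have hFstar : F bstar = 3 * ((T : ℝ) - 1) + 5 := by
    have h1 : F bstar = ∑ t : Fin T, ((3 : ℝ) + if (t : ℕ) = T - 1 then 2 else 0) := by
      apply Finset.sum_congr rfl
      intro t _
      rw [hlead_star t]
      simp only [pay₂, bstar]
      by_cases h : (t : ℕ) = T - 1 <;> simp [h] <;> norm_num
    rw [h1, Finset.sum_add_distrib, Finset.sum_const, Finset.card_univ, Fintype.card_fin,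
      hsum_ind]
    have : (1 : ℝ) ≤ (T : ℝ) := by exact_mod_cast hT1
    push_cast
    ring
  -- compute L bstar
  have hLstar : L bstar = 3 * ((T : ℝ) - 1) := by
    have h1 : L bstar = ∑ t : Fin T, ((3 : ℝ) + if (t : ℕ) = T - 1 then -3 else 0) := by
      apply Finset.sum_congr rfl
      intro t _
      rw [hlead_star t]
      simp only [pay₁, bstar]
      by_cases h : (t : ℕ) = T - 1 <;> simp [h] <;> norm_num
    rw [h1, Finset.sum_add_distrib, Finset.sum_const, Finset.card_univ, Fintype.card_fin,
      hsum_ind]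
    push_cast
    ring
  refine ⟨hFstar, ?_, hLstar, ?_, by norm_num⟩
  · -- uniqueness / maximality
    intro b hb
    rw [hFstar]
    by_cases hdef : ∃ t : Fin T, b t = true
    · -- there is a defection; take the earliest
      classical
      set s : Finset (Fin T) := Finset.univ.filter (fun t => b t = true) with hs
      have hsne : s.Nonempty := by
        obtain ⟨t, ht⟩ := hdef
        exact ⟨t, by simp [hs, ht]⟩
      set kf : Fin T := s.min' hsne with hkf
      have hbk : b kf = true := by
        have := s.min'_mem hsne
        simpa [hs] using this
      have hmin : ∀ t : Fin T, t < kf → b t = false := by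
        intro t ht
        by_contra h
        have hbt : b t = true := by simpa using h
        have : kf ≤ t := s.min'_le t (by simp [hs, hbt])
        exact absurd ht (not_lt.mpr this)
      -- lead values
      have hlead_le : ∀ t : Fin T, t ≤ kf → lead b t = false := by
        intro t ht
        simp only [lead, decide_eq_false_iff_not]
        rintro ⟨u, hut, hu⟩
        have : u < kf := lt_of_lt_of_le hut ht
        rw [hmin u this] at hu
        exact Bool.false_ne_true hu
      have hlead_gt : ∀ t : Fin T, kf < t → lead b t = true := by
        intro t ht
        simp only [lead, decide_eq_true_eq]
        exact ⟨kf, ht, hbk⟩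
      by_cases hk : (kf : ℕ) = T - 1
      · -- then b = bstar, contradiction
        exfalso
        apply hb
        funext t
        by_cases ht : (t : ℕ) = T - 1
        · have : t = kf := Fin.ext (by omega)
          simp [bstar, ht, this, hbk, hk]
        · have htlt : t < kf := by
            have := t.isLt
            exact Fin.lt_def.mpr (by omega)
          simp [bstar, ht, hmin t htlt]
      · -- kf < T - 1 : bound the sum
        have hkT : (kf : ℕ) < T := kf.isLt
        have hkT2 : (kf : ℕ) ≤ T - 2 := by omega
        -- termwise bound by g
        have hbound : F b ≤ ∑ t : Fin T,
            (if t < kf then (3:ℝ) else if t = kf then 5 else 1) := by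
          apply Finset.sum_le_sum
          intro t _
          rcases lt_trichotomy t kf with h | h | h
          · rw [hlead_le t h.le, hmin t h]
            simp [pay₂, h, Fin.lt_iff_val_lt_val]
          · rw [h, hlead_le kf le_rfl, hbk]
            simp [pay₂, h]
          · rw [hlead_gt t h]
            have h1 : ¬ t < kf := not_lt.mpr h.le
            have h2 : t ≠ kf := ne_of_gt h
            simp only [pay₂, h1, h2, if_false]
            cases b t <;> norm_num
        -- compute the bound
        have hg : ∑ t : Fin T, (if t < kf then (3:ℝ) else if t = kf then 5 else 1)
            = ∑ t : Fin T, ((1:ℝ) + (if t < kf then 2 else 0) + (if t = kf then 4 else 0)) := by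
          apply Finset.sum_congr rfl
          intro t _
          rcases lt_trichotomy t kf with h | h | h <;>
            simp [h, ne_of_gt, ne_of_lt, not_lt.mpr h.le] <;> norm_num
        have hg2 : ∑ t : Fin T, ((1:ℝ) + (if t < kf then 2 else 0) + (if t = kf then 4 else 0))
            = (T : ℝ) + 2 * (kf : ℕ) + 4 := by
          have e1 : ∀ t : Fin T, ((1:ℝ) + (if t < kf then 2 else 0) + (if t = kf then 4 else 0))
              = (fun i : ℕ => (1:ℝ) + (if i < (kf : ℕ) then 2 else 0)
                  + (if i = (kf : ℕ) then 4 else 0)) (t : ℕ) := by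
            intro t
            simp only [Fin.lt_def, Fin.ext_iff]
          rw [Finset.sum_congr rfl (fun t _ => e1 t),
            Fin.sum_univ_eq_sum_range (fun i : ℕ => (1:ℝ) + (if i < (kf : ℕ) then 2 else 0)
              + (if i = (kf : ℕ) then 4 else 0)) T]
          rw [Finset.sum_add_distrib, Finset.sum_add_distrib, Finset.sum_const,
            Finset.card_range]
          have e2 : (∑ i ∈ Finset.range T, if i < (kf : ℕ) then (2:ℝ) else 0)
              = 2 * (kf : ℕ) := by
            rw [← Finset.sum_filter]
            have hf : (Finset.range T).filter (· < (kf : ℕ)) = Finset.range (kf : ℕ) := by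
              ext i
              simp only [Finset.mem_filter, Finset.mem_range]
              omega
            rw [hf, Finset.sum_const, Finset.card_range, nsmul_eq_mul]
            ring
          have e3 : (∑ i ∈ Finset.range T, if i = (kf : ℕ) then (4:ℝ) else 0) = 4 := by
            rw [Finset.sum_ite_eq' (Finset.range T) ((kf : ℕ)) (fun _ => (4:ℝ))]
            simp [hkT]
          rw [e2, e3, nsmul_eq_mul]
          ring
        have hfinal : F b ≤ (T : ℝ) + 2 * (kf : ℕ) + 4 := by
          rw [← hg2, ← hg]; exact hbound
        have hcast : ((kf : ℕ) : ℝ) + 2 ≤ (T : ℝ) := by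
          exact_mod_cast (by omega : (kf : ℕ) + 2 ≤ T)
        calc F b ≤ (T : ℝ) + 2 * (kf : ℕ) + 4 := hfinal
          _ < 3 * ((T : ℝ) - 1) + 5 := by linarith
    · -- never defects
      push_neg at hdef
      have hb0 : ∀ t, b t = false := fun t => by
        cases h : b t
        · rfl
        · exact absurd h (by simpa using hdef t)
      have hlf : ∀ t : Fin T, lead b t = false := by
        intro t
        simp only [lead, decide_eq_false_iff_not]
        rintro ⟨u, _, hu⟩
        rw [hb0 u] at hu
        exact Bool.false_ne_true hu
      have : F b = 3 * (T : ℝ) := by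
        have h1 : F b = ∑ _t : Fin T, (3:ℝ) := by
          apply Finset.sum_congr rfl
          intro t _
          rw [hlf t, hb0 t]
          simp [pay₂]
        rw [h1, Finset.sum_const, Finset.card_univ, Fintype.card_fin]
        push_cast; ring
      rw [this]
      have : (3 : ℝ) ≤ (T : ℝ) := by exact_mod_cast hT
      nlinarith
  · -- average
    rw [hLstar]
    rw [ge_iff_le, le_div_iff₀ (by positivity)]
    have : (3 : ℝ) ≤ (T : ℝ) := by exact_mod_cast hT
    nlinarith
end

section
/- Let n, m, T ≥ 1, let A : Fin n → Fin m → ℝ, let x : Fin T → (Fin n → ℝ) and y : Fin T → (Fin m → ℝ) be sequences of probability vectors on Fin n and Fin m respectively, and let r : ℝ. Let P := ∑ t, ∑ i, ∑ j, x t i * A i j * y t j. Suppose the regret bound: for every i : Fin n, (∑ t, ∑ j, A i j * y t j) − P ≤ r. Then for every probability vector x̄ on Fin n, P ≥ T * (min over j : Fin m of ∑ i, x̄ i * A i j) − r. -/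
/-- Core of Lemma C.5 (zs_nr_st): a regret-`r` sequence for the row player
in a zero-sum game guarantees total payoff at least `T·v - r` where `v` is
the value guaranteed by any fixed row mixed strategy. -/
theorem no_regret_stackelberg_zero_sum (n m T : ℕ) (hn : 1 ≤ n)
    (hm : 1 ≤ m) (hT : 1 ≤ T) (A : Fin n → Fin m → ℝ)
    (x : Fin T → Fin n → ℝ) (y : Fin T → Fin m → ℝ)
    (hx : ∀ t, (∀ i, 0 ≤ x t i) ∧ ∑ i, x t i = 1)
    (hy : ∀ t, (∀ j, 0 ≤ y t j) ∧ ∑ j, y t j = 1)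
    (r : ℝ)
    (hreg : ∀ i : Fin n,
      (∑ t, ∑ j, A i j * y t j)
        - (∑ t, ∑ i', ∑ j, x t i' * A i' j * y t j) ≤ r)
    (xb : Fin n → ℝ) (hxb : ∀ i, 0 ≤ xb i) (hxb1 : ∑ i, xb i = 1) :
    ∑ t, ∑ i, ∑ j, x t i * A i j * y t j
      ≥ T * (⨅ j, ∑ i, xb i * A i j) - r := by
  have hm' : Nonempty (Fin m) := ⟨⟨0, hm⟩⟩
  set P := ∑ t, ∑ i, ∑ j, x t i * A i j * y t j with hP
  set g : Fin m → ℝ := fun j => ∑ i, xb i * A i j with hg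
  have hbdd : BddBelow (Set.range g) := (Set.finite_range g).bddBelow
  set v := ⨅ j, g j with hv
  have hvle : ∀ j, v ≤ g j := fun j => ciInf_le hbdd j
  have h1 : ∀ t : Fin T, v ≤ ∑ j, g j * y t j := by
    intro t
    have : ∑ j, v * y t j ≤ ∑ j, g j * y t j :=
      Finset.sum_le_sum fun j _ => mul_le_mul_of_nonneg_right (hvle j) ((hy t).1 j)
    calc v = ∑ j, v * y t j := by rw [← Finset.mul_sum, (hy t).2, mul_one]
    _ ≤ _ := this
  have h2 : (T : ℝ) * v ≤ ∑ t, ∑ j, g j * y t j := by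
    calc (T : ℝ) * v = ∑ _t : Fin T, v := by simp [Finset.sum_const, mul_comm]
    _ ≤ _ := Finset.sum_le_sum fun t _ => h1 t
  have step : ∀ t, ∑ j, g j * y t j = ∑ i, xb i * ∑ j, A i j * y t j := by
    intro t
    simp only [hg, Finset.sum_mul]
    rw [Finset.sum_comm]
    exact Finset.sum_congr rfl fun i _ => by
      rw [Finset.mul_sum]
      exact Finset.sum_congr rfl fun j _ => by ring
  have h3 : ∑ t, ∑ j, g j * y t j = ∑ i, xb i * ∑ t, ∑ j, A i j * y t j := by
    simp only [step]
    rw [Finset.sum_comm]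
    exact Finset.sum_congr rfl fun i _ => by rw [Finset.mul_sum]
  have h4 : ∑ i, xb i * ∑ t, ∑ j, A i j * y t j ≤ P + r := by
    calc ∑ i, xb i * ∑ t, ∑ j, A i j * y t j
        ≤ ∑ i, xb i * (P + r) :=
          Finset.sum_le_sum fun i _ =>
            mul_le_mul_of_nonneg_left (by linarith [hreg i]) (hxb i)
    _ = P + r := by rw [← Finset.sum_mul, hxb1, one_mul]
  linarith [h2, h3.le, h3.ge]
end

section
/- Consider the scaled Prisoner's Dilemma with follower payoffs M₂ (1,1) = 3/5, M₂ (1,2) = 1, M₂ (2,1) = 0, M₂ (2,2) = 1/5 and leader payoffs M₁ (1,1) = 3/5, M₁ (1,2) = 0, M₁ (2,1) = 1, M₁ (2,2) = 1/5. Then: (a) for every probability vector x on Fin 2, max (x 1 * (3/5) + x 2 * 0) (x 1 * 1 + x 2 * (1/5)) ≥ 1/5, and the probability vector x = (0, 1) attains 1/5 (so the follower's threat value is 1/5); and (b) for every probability vector α = (α₁₁, α₁₂, α₂₁, α₂₂) on the four action pairs with (3/5)*α₁₁ + α₁₂ + (1/5)*α₂₂ ≥ 1/5, one has (3/5)*α₁₁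 + α₂₁ + (1/5)*α₂₂ ≤ 13/15; moreover α = (1/3, 0, 2/3, 0) satisfies the constraint and attains (3/5)*(1/3) + 2/3 = 13/15 (so the LP optimum is 13/15). -/
/-- Appendix E computation for the scaled Prisoner's Dilemma: the
follower's threat value is `1/5` (part (a)), and the LP optimum is `13/15`,
attained at `α = (1/3, 0, 2/3, 0)` (part (b)). -/
theorem prisoners_dilemma_lp_computation :
    ((∀ x : Fin 2 → ℝ, (∀ i, 0 ≤ x i) → x 0 + x 1 = 1 →
        max (x 0 * (3 / 5) + x 1 * 0) (x 0 * 1 + x 1 * (1 / 5)) ≥ 1 / 5) ∧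
      max ((0 : ℝ) * (3 / 5) + 1 * 0) ((0 : ℝ) * 1 + 1 * (1 / 5)) = 1 / 5) ∧
    ((∀ a11 a12 a21 a22 : ℝ, 0 ≤ a11 → 0 ≤ a12 → 0 ≤ a21 → 0 ≤ a22 →
        a11 + a12 + a21 + a22 = 1 →
        (3 / 5) * a11 + a12 + (1 / 5) * a22 ≥ 1 / 5 →
        (3 / 5) * a11 + a21 + (1 / 5) * a22 ≤ 13 / 15) ∧
      ((3 / 5) * (1 / 3 : ℝ) + 0 + (1 / 5) * 0 ≥ 1 / 5 ∧
        (3 / 5) * (1 / 3 : ℝ) + 2 / 3 + (1 / 5) * 0 = 13 / 15)) := by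
  refine ⟨⟨fun x hx hsum => le_trans ?_ (le_max_right _ _), by norm_num⟩,
    fun a11 a12 a21 a22 h11 h12 h21 h22 hsum hc => by nlinarith, by norm_num⟩
  have h0 := hx 0; have h1 := hx 1
  linarith
end

section
/- Consider the 2×2 game with leader payoffs M₁ (1,1) = 1, M₁ (1,2) = 0, M₁ (2,1) = 0, M₁ (2,2) = 0 and follower payoffs M₂ (1,1) = 1/2, M₂ (1,2) = 1, M₂ (2,1) = 0, M₂ (2,2) = 0. Then: (a) for every probability vector x on Fin 2 and every probability vector y on Fin 2 that is a best response to x (i.e., for all probability vectors y', ∑ i, ∑ j, x i * M₂ (i,j) * y j ≥ ∑ i, ∑ j, x i * M₂ (i,j) * y' j), the leader's payoff satisfies ∑ i, ∑ j, x i * M₁ (i,j) * y j = 0; and (b) the follower's threat value of this game is 0, i.e., min over probability vectors x of (max over j of ∑ i, x i * M₂ (i,j)) = 0, and the probability vector α on action pairs with α (1,1) = 1 (and 0 elsewhere) satisfies ∑ k, α k * M₂ k = 1/2 ≥ 0 and gives leader value ∑ k, α k * M₁ k = 1. -/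
/-- Appendix C.4 example showing a `1/T`-approximation to the LP upper
bound is inevitable: against any best-responding follower the leader's
single-round payoff is `0` (part (a)), while the follower's threat value is
`0` and the distribution on the pair `(1,1)` is LP-feasible with leader
value `1` (part (b)). -/
theorem lp_gap_inevitable :
    let M₁ : Fin 2 → Fin 2 → ℝ := ![![1, 0], ![0, 0]]
    let M₂ : Fin 2 → Fin 2 → ℝ := ![![1 / 2, 1], ![0, 0]]
    (∀ x : Fin 2 → ℝ, (∀ i, 0 ≤ x i) → (∑ i, x i = 1) →
      ∀ y : Fin 2 → ℝ, (∀ j, 0 ≤ y j) → (∑ j, y j = 1) →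
      (∀ y' : Fin 2 → ℝ, (∀ j, 0 ≤ y' j) → (∑ j, y' j = 1) →
        ∑ i, ∑ j, x i * M₂ i j * y j ≥ ∑ i, ∑ j, x i * M₂ i j * y' j) →
      ∑ i, ∑ j, x i * M₁ i j * y j = 0) ∧
    ((∀ x : Fin 2 → ℝ, (∀ i, 0 ≤ x i) → (∑ i, x i = 1) →
        (0 : ℝ) ≤ ⨆ j, ∑ i, x i * M₂ i j) ∧
      (∃ x : Fin 2 → ℝ, (∀ i, 0 ≤ x i) ∧ (∑ i, x i = 1) ∧
        (⨆ j, ∑ i, x i * M₂ i j) = 0)) ∧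
    (let α : Fin 2 × Fin 2 → ℝ := fun k => if k = (0, 0) then 1 else 0
     (∀ k, 0 ≤ α k) ∧ (∑ k, α k = 1) ∧
      (∑ k, α k * M₂ k.1 k.2 = 1 / 2) ∧ ((1 / 2 : ℝ) ≥ 0) ∧
      (∑ k, α k * M₁ k.1 k.2 = 1)) := by

  intro M₁ M₂
  refine ⟨?_, ⟨?_, ?_⟩, ?_⟩
  · intro x hx hxs y hy hys hbr
    have h := hbr ![0, 1] (by intro j; fin_cases j <;> norm_num)
      (by simp [Fin.sum_univ_two])
    simp only [M₁, M₂, Fin.sum_univ_two, Matrix.cons_val_zero, Matrix.cons_val_one,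
      Matrix.head_cons] at h ⊢
    have hy0 := hy 0
    have hx0 := hx 0
    have hs := hys
    simp only [Fin.sum_univ_two] at hs
    nlinarith [mul_nonneg hx0 hy0]
  · intro x hx hxs
    have hb : BddAbove (Set.range fun j : Fin 2 => ∑ i, x i * M₂ i j) :=
      Set.Finite.bddAbove (Set.finite_range _)
    have h1 : (∑ i, x i * M₂ i 1) ≤ ⨆ j, ∑ i, x i * M₂ i j := le_ciSup hb 1
    have : (∑ i, x i * M₂ i 1) = x 0 := by
      simp [M₂, Fin.sum_univ_two]
    linarith [hx 0, this ▸ h1]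
  · refine ⟨![0, 1], by intro i; fin_cases i <;> norm_num, by simp [Fin.sum_univ_two], ?_⟩
    have hz : ∀ j : Fin 2, (∑ i, (![0, 1] : Fin 2 → ℝ) i * M₂ i j) = 0 := by
      intro j; fin_cases j <;> simp [M₂, Fin.sum_univ_two]
    calc (⨆ j, ∑ i, (![0, 1] : Fin 2 → ℝ) i * M₂ i j) = ⨆ _ : Fin 2, (0 : ℝ) := by
          exact iSup_congr hz
      _ = 0 := ciSup_const
  · intro α
    refine ⟨?_, ?_, ?_, by norm_num, ?_⟩
    · intro k; simp only [α]; split <;> norm_num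
    · simp [α, Fintype.sum_prod_type, Fin.sum_univ_two]
    · simp [α, M₂, Fintype.sum_prod_type, Fin.sum_univ_two, Prod.ext_iff]
    · simp [α, M₁, Fintype.sum_prod_type, Fin.sum_univ_two, Prod.ext_iff]
end
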